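/- Let N ≥ 2 and let B be an N×N skew-symmetric integer matrix such that node 1 is a sink of B and node 2 is a sink of μ₁(B). Then μ₂(μ₁(B)) = ρ² B ρ⁻² (i.e. B has mutation period 2) if and only if τ² B τ⁻² = B. -/
import Mathlib


open Matrix

/-- The cyclic permutation matrix ρ: ρ_{i+1,i} = 1 (1-based), ρ_{1,N} = 1. -/
def rhoM (N : ℕ) : Matrix (Fin N) (Fin N) ℤ :=
  Matrix.of fun i j => if (i : ℕ) = ((j : ℕ) + 1) % N then 1 else 0

/-- The skew-rotation τ: equal to ρ except τ_{1,N} = −1. -/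
def tauM (N : ℕ) : Matrix (Fin N) (Fin N) ℤ :=
  Matrix.of fun i j =>
    if (i : ℕ) = ((j : ℕ) + 1) % N then (if (j : ℕ) + 1 = N then -1 else 1) else 0

/-- Fomin–Zelevinsky matrix mutation at node `k`. -/
def mutB {N : ℕ} (k : Fin N) (B : Matrix (Fin N) (Fin N) ℤ) : Matrix (Fin N) (Fin N) ℤ :=
  Matrix.of fun i j =>
    if i = k ∨ j = k then -B i j
    else B i j + (|B i k| * B k j + B i k * |B k j|) / 2

/-- Node `k` is a sink of `B` if all entries of column `k` are nonnegative. -/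
def IsSink {N : ℕ} (k : Fin N) (B : Matrix (Fin N) (Fin N) ℤ) : Prop :=
  ∀ i, 0 ≤ B i k


/-- generalized shift matrix with signs -/
def Pm (N : ℕ) [NeZero N] (s : Fin N → ℤ) : Matrix (Fin N) (Fin N) ℤ :=
  Matrix.of fun i j => if i = j + 1 then s j else 0

section aux
variable {N : ℕ} [NeZero N]

lemma Pm_mul (s : Fin N → ℤ) (A : Matrix (Fin N) (Fin N) ℤ) (i j : Fin N) :
    (Pm N s * A) i j = s (i - 1) * A (i - 1) j := by
  rw [Matrix.mul_apply, Finset.sum_eq_single (i - 1)]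
  · simp [Pm, sub_add_cancel]
  · intro k _ hk
    have h : i ≠ k + 1 := fun h => hk (eq_sub_iff_add_eq.mpr h.symm)
    simp [Pm, h]
  · simp

lemma mul_PmT (s : Fin N → ℤ) (A : Matrix (Fin N) (Fin N) ℤ) (i j : Fin N) :
    (A * (Pm N s)ᵀ) i j = A i (j - 1) * s (j - 1) := by
  rw [Matrix.mul_apply, Finset.sum_eq_single (j - 1)]
  · simp [Pm, sub_add_cancel]
  · intro k _ hk
    have h : j ≠ k + 1 := fun h => hk (eq_sub_iff_add_eq.mpr h.symm)
    simp [Pm, h]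
  · simp

lemma Pm_mul_PmT (s : Fin N → ℤ) (hsq : ∀ j, s j * s j = 1) :
    Pm N s * (Pm N s)ᵀ = 1 := by
  ext i j
  rw [mul_PmT]
  by_cases h : i = j
  · subst h
    simp [Pm, sub_add_cancel, Matrix.one_apply, hsq]
  · have h2 : i ≠ j - 1 + 1 := by rw [sub_add_cancel]; exact h
    simp [Pm, h2, Matrix.one_apply, h]

lemma Pm_inv (s : Fin N → ℤ) (hsq : ∀ j, s j * s j = 1) :
    (Pm N s)⁻¹ = (Pm N s)ᵀ :=
  Matrix.inv_eq_right_inv (Pm_mul_PmT s hsq)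

omit [NeZero N] in
lemma mut_sink {k : Fin N} {A : Matrix (Fin N) (Fin N) ℤ}
    (hA : ∀ i j, A j i = -A i j) (hs : ∀ i, 0 ≤ A i k) (i j : Fin N) :
    mutB k A i j = (if i = k then -1 else 1) * ((if j = k then -1 else 1) * A i j) := by
  unfold mutB
  simp only [Matrix.of_apply]
  by_cases hi : i = k
  · by_cases hj : j = k
    · rw [if_pos (Or.inl hi), if_pos hi, if_pos hj, hi, hj]
      linarith [hA k k]
    · rw [if_pos (Or.inl hi), if_pos hi, if_neg hj]; ring
  · by_cases hj : j = k
    · rw [if_pos (Or.inr hj), if_neg hi, if_pos hj]; ring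
    · rw [if_neg (by tauto), if_neg hi, if_neg hj, one_mul, one_mul]
      have h1 : 0 ≤ A i k := hs i
      have h2 : A k j ≤ 0 := by rw [hA j k]; linarith [hs j]
      rw [abs_of_nonneg h1, abs_of_nonpos h2,
        show A i k * A k j + A i k * -A k j = 0 by ring]
      simp

end aux

/-- Period 2 sink-type equation: if node 1 is a sink of `B` and node 2 is a sink of
`μ₁ B`, then `B` has mutation period 2 iff `τ² B τ⁻² = B`. -/
theorem stmt2 (N : ℕ) (hN : 2 ≤ N) (B : Matrix (Fin N) (Fin N) ℤ)
    (hskew : Bᵀ = -B) (hsink1 : IsSink ⟨0, by omega⟩ B)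
    (hsink2 : IsSink ⟨1, by omega⟩ (mutB ⟨0, by omega⟩ B)) :
    mutB ⟨1, by omega⟩ (mutB ⟨0, by omega⟩ B) = rhoM N ^ 2 * B * ((rhoM N)⁻¹) ^ 2 ↔
      tauM N ^ 2 * B * ((tauM N)⁻¹) ^ 2 = B := by
  haveI : NeZero N := ⟨by omega⟩
  have hv1 : ((1 : Fin N) : ℕ) = 1 := by
    rw [Fin.val_one' N]; exact Nat.mod_eq_of_lt (by omega)
  have hz : (⟨0, by omega⟩ : Fin N) = 0 := by ext; simp
  have ho : (⟨1, by omega⟩ : Fin N) = 1 := by ext; rw [hv1]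
  rw [hz, ho]
  have hsk1 : ∀ i, 0 ≤ B i 0 := by have h := hsink1; rw [hz] at h; exact h
  have hsk2 : ∀ i, 0 ≤ mutB 0 B i 1 := by have h := hsink2; rw [hz, ho] at h; exact h
  -- sign functions
  set d0 : Fin N → ℤ := fun i => if i = 0 then -1 else 1 with hd0def
  set d1 : Fin N → ℤ := fun i => if i = 1 then -1 else 1 with hd1def
  set st : Fin N → ℤ := fun j => if j + 1 = 0 then -1 else 1 with hstdef
  have hd0sq : ∀ i, d0 i * d0 i = 1 := by intro i; by_cases h : i = 0 <;> simp [hd0def, h]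
  have hd1sq : ∀ i, d1 i * d1 i = 1 := by intro i; by_cases h : i = 1 <;> simp [hd1def, h]
  have hstsq : ∀ j, st j * st j = 1 := by intro j; by_cases h : j + 1 = 0 <;> simp [hstdef, h]
  -- rewriting rhoM and tauM as Pm
  have hcond : ∀ i j : Fin N, ((i : ℕ) = ((j : ℕ) + 1) % N) ↔ i = j + 1 := by
    intro i j
    rw [Fin.ext_iff, Fin.val_add, hv1]
  have hcond2 : ∀ j : Fin N, ((j : ℕ) + 1 = N) ↔ j + 1 = 0 := by
    intro j
    rw [Fin.ext_iff, Fin.val_add, hv1, Fin.val_zero]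
    have hj : (j : ℕ) < N := j.isLt
    constructor
    · intro h; rw [h, Nat.mod_self]
    · intro h
      rcases Nat.lt_or_ge ((j : ℕ) + 1) N with hlt | hge
      · rw [Nat.mod_eq_of_lt hlt] at h; omega
      · omega
  have hrm : rhoM N = Pm N (fun _ => 1) := by
    ext i j; simp only [rhoM, Pm, Matrix.of_apply, hcond]
  have htm : tauM N = Pm N st := by
    ext i j
    simp only [tauM, Pm, Matrix.of_apply, hcond, hstdef]
    by_cases h : i = j + 1
    · rw [if_pos h, if_pos h]
      exact if_congr (hcond2 j) rfl rfl
    · rw [if_neg h, if_neg h]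
  -- skewness and mutation formulas
  have hBskew : ∀ i j, B j i = -B i j := by
    intro i j
    have := congrFun (congrFun hskew i) j
    simpa using this
  have hm1 : ∀ i j, mutB 0 B i j = d0 i * (d0 j * B i j) := mut_sink hBskew hsk1
  have hAskew : ∀ i j, mutB 0 B j i = -mutB 0 B i j := by
    intro i j
    rw [hm1 j i, hm1 i j, hBskew i j]; ring
  have hm2 : ∀ i j, mutB 1 (mutB 0 B) i j = d1 i * (d1 j * mutB 0 B i j) :=
    mut_sink hAskew hsk2
  -- entry formula for conjugation
  have entryR : ∀ (s : Fin N → ℤ) (_ : ∀ j, s j * s j = 1) (i j : Fin N),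
      (Pm N s ^ 2 * B * ((Pm N s)⁻¹) ^ 2) i j
        = s (i-1) * (s (i-1-1) * (B (i-1-1) (j-1-1) * s (j-1-1) * s (j-1))) := by
    intro s hsq i j
    rw [Pm_inv s hsq, pow_two, pow_two]
    rw [show Pm N s * Pm N s * B * ((Pm N s)ᵀ * (Pm N s)ᵀ)
        = Pm N s * (Pm N s * (B * (Pm N s)ᵀ * (Pm N s)ᵀ)) by
      simp only [Matrix.mul_assoc]]
    rw [Pm_mul, Pm_mul, mul_PmT, mul_PmT]
  -- pointwise characterizations
  have Liff : mutB 1 (mutB 0 B) = rhoM N ^ 2 * B * ((rhoM N)⁻¹) ^ 2 ↔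
      ∀ i j, d1 i * (d1 j * (d0 i * (d0 j * B i j))) = B (i-1-1) (j-1-1) := by
    rw [← Matrix.ext_iff]
    apply forall_congr'; intro i; apply forall_congr'; intro j
    rw [hm2 i j, hm1 i j, hrm, entryR _ (fun _ => one_mul 1) i j]
    constructor <;> intro h <;> linarith [h]
  have hst1 : ∀ i : Fin N, st (i - 1) = d0 i := by
    intro i; simp only [hstdef, hd0def, sub_add_cancel]
  have hst2 : ∀ i : Fin N, st (i - 1 - 1) = d1 i := by
    intro i
    simp only [hstdef, hd1def, sub_add_cancel]
    by_cases h : i = 1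
    · rw [if_pos (sub_eq_zero.mpr h), if_pos h]
    · rw [if_neg (fun hc => h (sub_eq_zero.mp hc)), if_neg h]
  have Riff : tauM N ^ 2 * B * ((tauM N)⁻¹) ^ 2 = B ↔
      ∀ i j, d0 i * (d1 i * (B (i-1-1) (j-1-1) * d1 j * d0 j)) = B i j := by
    rw [← Matrix.ext_iff]
    apply forall_congr'; intro i; apply forall_congr'; intro j
    rw [htm, entryR st hstsq i j, hst2 i, hst2 j, hst1 i, hst1 j]
  rw [Liff, Riff]
  constructor
  · intro h i j
    have h1 := h i j
    rw [← h1]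
    linear_combination (d1 i * d1 i * d0 j * d0 j * d1 j * d1 j * B i j) * hd0sq i
      + (d0 j * d0 j * d1 j * d1 j * B i j) * hd1sq i
      + (d1 j * d1 j * B i j) * hd0sq j + (B i j) * hd1sq j
  · intro h i j
    have h1 := h i j
    rw [← h1]
    linear_combination (d1 i * d1 i * d0 j * d0 j * d1 j * d1 j * B (i-1-1) (j-1-1)) * hd0sq i
      + (d0 j * d0 j * d1 j * d1 j * B (i-1-1) (j-1-1)) * hd1sq i
      + (d1 j * d1 j * B (i-1-1) (j-1-1)) * hd0sq j + (B (i-1-1) (j-1-1)) * hd1sq j
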